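/- For every α > 0, the function s(α) := ∫₀¹ (α/(8πt)) Σ_{k∈ℤ} ( ∫_{2k−1}^{2k+1} e^{−αx²/(8t)} dx )² dt admits the equivalent representation s(α) = (1/2) Σ_{k∈ℤ} ∫₀¹ erf( (2k−1)√(α/(8t)) ) · [ erf( (2k−1)√(α/(8t)) ) − erf( (2k+1)√(α/(8t)) ) ] dt. -/

import Mathlib

open MeasureTheory Filter

/-- The error function `erf x = (2/√π) ∫_0^x e^{-s²} ds`. -/
noncomputable def erf (x : ℝ) : ℝ :=
  (2 / Real.sqrt Real.pi) * ∫ s in (0:ℝ)..x, Real.exp (-s ^ 2)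

/-- `c(α) = ∫_0^1 erf(√(α/(8t))) dt`. -/
noncomputable def cFun (α : ℝ) : ℝ :=
  ∫ t in (0:ℝ)..1, erf (Real.sqrt (α / (8 * t)))

/-- `s(α) = ∫_0^1 (α/(8πt)) Σ_{k∈ℤ} (∫_{2k-1}^{2k+1} e^{-αx²/(8t)} dx)² dt`. -/
noncomputable def sFun (α : ℝ) : ℝ :=
  ∫ t in (0:ℝ)..1, (α / (8 * Real.pi * t)) *
    ∑' k : ℤ, (∫ x in (2 * (k : ℝ) - 1)..(2 * (k : ℝ) + 1),
      Real.exp (-(α * x ^ 2) / (8 * t))) ^ 2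

/-!
Substituting `c = √(α/(8t))`, the inner Gaussian integrals are increments
`√π/(2c) (a(k+1) - a(k))` of the sequence `a(k) = erf((2k-1)c)`. This sequence is monotone,
bounded by `1` and satisfies `a(1-k) = -a(k)`; writing `d(k) = a(k+1) - a(k)`, the reflection
`k ↦ -k` turns `∑ a(k+1) d(k)` into `-∑ a(k) d(k)`, so `∑ d(k)² = 2 ∑ a(k) (a(k) - a(k+1))`.
Sum and `t`-integral may then be exchanged because the `k`-th term is bounded by `d(k)`,
whose sum telescopes to at most `2`.
-/

open Real Finset

lemma intervalIntegrable_exp_neg_sq (a b : ℝ) :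
    IntervalIntegrable (fun s : ℝ => exp (-s ^ 2)) volume a b :=
  (by fun_prop : Continuous fun s : ℝ => exp (-s ^ 2)).intervalIntegrable a b

@[fun_prop]
lemma continuous_erf : Continuous erf :=
  continuous_const.mul (intervalIntegral.continuous_primitive intervalIntegrable_exp_neg_sq 0)

lemma erf_sub_erf (a b : ℝ) : erf b - erf a = 2 / √π * ∫ s in a..b, exp (-s ^ 2) := by
  rw [erf, erf, ← mul_sub, intervalIntegral.integral_interval_sub_left
    (intervalIntegrable_exp_neg_sq _ _) (intervalIntegrable_exp_neg_sq _ _)]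

lemma erf_neg (x : ℝ) : erf (-x) = -erf x := by
  have h := intervalIntegral.integral_comp_neg (a := 0) (b := x) fun s => exp (-s ^ 2)
  simp only [even_two, Even.neg_pow, neg_zero] at h
  rw [erf, erf, intervalIntegral.integral_symm, ← h]
  exact mul_neg _ _

lemma erf_monotone : Monotone erf := fun x y hxy => by
  have := erf_sub_erf x y
  have : 0 ≤ ∫ s in x..y, exp (-s ^ 2) :=
    intervalIntegral.integral_nonneg hxy fun s _ => (exp_pos _).le
  nlinarith [show 0 ≤ 2 / √π by positivity]

lemma erf_le_one (x : ℝ) : erf x ≤ 1 := by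
  have hle : ∫ s in (0:ℝ)..x, exp (-s ^ 2) ≤ √π / 2 := by
    rcases le_total x 0 with hx | hx
    · rw [intervalIntegral.integral_of_ge hx]
      have : 0 ≤ ∫ s in Set.Ioc x 0, exp (-s ^ 2) :=
        setIntegral_nonneg measurableSet_Ioc fun s _ => (exp_pos _).le
      linarith [show 0 ≤ √π by positivity]
    · have hint : IntegrableOn (fun s : ℝ => exp (-s ^ 2)) (Set.Ioi 0) := by
        simpa using (integrable_exp_neg_mul_sq one_pos).integrableOn
      rw [intervalIntegral.integral_of_le hx, show √π / 2 = ∫ s in Set.Ioi (0:ℝ), exp (-s ^ 2) by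
        simpa using (integral_gaussian_Ioi 1).symm]
      exact setIntegral_mono_set hint (ae_of_all _ fun s => (exp_pos _).le)
        Set.Ioc_subset_Ioi_self.eventuallyLE
  calc erf x ≤ 2 / √π * (√π / 2) := mul_le_mul_of_nonneg_left hle (by positivity)
    _ = 1 := by field_simp

lemma abs_erf_le_one (x : ℝ) : |erf x| ≤ 1 :=
  abs_le.2 ⟨by linarith [erf_neg x ▸ erf_le_one (-x)], erf_le_one x⟩

lemma integral_exp_neg_mul_sq_eq_erf {c : ℝ} (hc : c ≠ 0) (a b : ℝ) :
    ∫ x in a..b, exp (-(c * x) ^ 2) = √π / (2 * c) * (erf (c * b) - erf (c * a)) := by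
  rw [intervalIntegral.integral_comp_mul_left (fun x => exp (-x ^ 2)) hc, erf_sub_erf, smul_eq_mul]
  field_simp

lemma sum_Ico_int_sub {M : Type*} [AddCommGroup M] (a : ℤ → M) {m n : ℤ} (h : m ≤ n) :
    ∑ k ∈ Ico m n, (a (k + 1) - a k) = a n - a m := by
  induction n, h using Int.leInduction with
  | base => simp
  | succ n hmn ih =>
    rw [← insert_Ico_right_eq_Ico_add_one hmn, sum_insert (by simp), ih]
    abel

section MonotoneBounded

variable {a : ℤ → ℝ} {C : ℝ}

lemma sum_sub_le_of_monotone (hmono : Monotone a) (hbdd : ∀ k, |a k| ≤ C) (u : Finset ℤ) :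
    ∑ k ∈ u, (a (k + 1) - a k) ≤ 2 * C := by
  obtain ⟨N, hN⟩ : ∃ N : ℕ, u ⊆ Ico (-(N : ℤ)) N :=
    ⟨u.sup Int.natAbs + 1, fun k hk => by
      have := u.le_sup (f := Int.natAbs) hk
      simp only [mem_Ico]
      omega⟩
  calc ∑ k ∈ u, (a (k + 1) - a k) ≤ ∑ k ∈ Ico (-(N : ℤ)) N, (a (k + 1) - a k) :=
        sum_le_sum_of_subset_of_nonneg hN fun k _ _ => sub_nonneg.2 (hmono (by omega))
    _ = a N - a (-N) := sum_Ico_int_sub a (by omega)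
    _ ≤ 2 * C := by linarith [abs_le.1 (hbdd N), abs_le.1 (hbdd (-N))]

lemma summable_sub_of_monotone (hmono : Monotone a) (hbdd : ∀ k, |a k| ≤ C) :
    Summable fun k => a (k + 1) - a k :=
  summable_of_sum_le (fun k => sub_nonneg.2 (hmono (by omega))) (sum_sub_le_of_monotone hmono hbdd)

lemma tsum_sq_sub_eq_two_mul_tsum (hodd : ∀ k, a (1 - k) = -a k)
    (hd : Summable fun k => a (k + 1) - a k) (hbdd : ∀ k, |a k| ≤ C) :
    ∑' k, (a (k + 1) - a k) ^ 2 = 2 * ∑' k, a k * (a k - a (k + 1)) := by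
  set d : ℤ → ℝ := fun k => a (k + 1) - a k
  have hmul : ∀ b : ℤ → ℝ, (∀ k, |b k| ≤ C) → Summable fun k => b k * d k := fun b hb =>
    (hd.abs.mul_left C).of_norm_bounded fun k => by
      rw [norm_mul, norm_eq_abs, norm_eq_abs]
      exact mul_le_mul_of_nonneg_right (hb k) (abs_nonneg _)
  have hreflect : ∑' k, a (k + 1) * d k = -∑' k, a k * d k := by
    rw [← (Equiv.neg ℤ).tsum_eq, ← tsum_neg]
    refine tsum_congr fun k => ?_
    have h₁ : a (-k + 1) = -a k := by rw [← hodd k]; ring_nf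
    have h₂ : a (-k) = -a (k + 1) := by rw [← hodd (k + 1)]; ring_nf
    simp only [Equiv.neg_apply, d, h₁, h₂]
    ring
  calc ∑' k, d k ^ 2 = ∑' k, (a (k + 1) * d k - a k * d k) := tsum_congr fun k => by ring
    _ = -2 * ∑' k, a k * d k := by
      rw [(hmul _ fun k => hbdd (k + 1)).tsum_sub (hmul a hbdd), hreflect]
      ring
    _ = 2 * ∑' k, a k * (a k - a (k + 1)) := by
      rw [neg_mul, ← mul_neg, ← tsum_neg]
      exact congrArg _ (tsum_congr fun k => by ring)

end MonotoneBounded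

noncomputable def erfSeq (c : ℝ) (k : ℤ) : ℝ := erf ((2 * k - 1) * c)

noncomputable def erfTerm (c : ℝ) (k : ℤ) : ℝ := erfSeq c k * (erfSeq c k - erfSeq c (k + 1))

section ErfSeq

variable {c : ℝ}

lemma erfSeq_add_one (k : ℤ) : erfSeq c (k + 1) = erf ((2 * k + 1) * c) := by
  rw [erfSeq]
  push_cast
  ring_nf

lemma erfSeq_one_sub (k : ℤ) : erfSeq c (1 - k) = -erfSeq c k := by
  rw [erfSeq, erfSeq, ← erf_neg]
  push_cast
  ring_nf

lemma erfSeq_monotone (hc : 0 ≤ c) : Monotone (erfSeq c) := fun k j hkj =>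
  erf_monotone (mul_le_mul_of_nonneg_right (by linarith [(Int.cast_le (R := ℝ)).2 hkj]) hc)

lemma abs_erfSeq_le_one (k : ℤ) : |erfSeq c k| ≤ 1 := abs_erf_le_one _

lemma integral_exp_neg_mul_sq_block (hc : c ≠ 0) (k : ℤ) :
    ∫ x in (2 * (k : ℝ) - 1)..(2 * (k : ℝ) + 1), exp (-(c * x) ^ 2)
      = √π / (2 * c) * (erfSeq c (k + 1) - erfSeq c k) := by
  rw [integral_exp_neg_mul_sq_eq_erf hc, erfSeq_add_one, erfSeq, mul_comm c, mul_comm c]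

lemma abs_erfTerm_le (hc : 0 ≤ c) (k : ℤ) : |erfTerm c k| ≤ erfSeq c (k + 1) - erfSeq c k := by
  have hd : 0 ≤ erfSeq c (k + 1) - erfSeq c k := sub_nonneg.2 (erfSeq_monotone hc (by omega))
  rw [erfTerm, abs_mul, abs_sub_comm, abs_of_nonneg hd]
  exact mul_le_of_le_one_left hd (abs_erfSeq_le_one k)

lemma sum_abs_erfTerm_le (hc : 0 ≤ c) (u : Finset ℤ) : ∑ k ∈ u, |erfTerm c k| ≤ 2 :=
  calc ∑ k ∈ u, |erfTerm c k| ≤ ∑ k ∈ u, (erfSeq c (k + 1) - erfSeq c k) :=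
        sum_le_sum fun k _ => abs_erfTerm_le hc k
    _ ≤ 2 * 1 := sum_sub_le_of_monotone (erfSeq_monotone hc) abs_erfSeq_le_one u
    _ = 2 := mul_one 2

lemma tsum_sq_integral_exp_neg_mul_sq_block (hc : 0 < c) :
    c ^ 2 / π * ∑' k : ℤ, (∫ x in (2 * (k : ℝ) - 1)..(2 * (k : ℝ) + 1), exp (-(c * x) ^ 2)) ^ 2
      = 1 / 2 * ∑' k, erfTerm c k := by
  simp_rw [integral_exp_neg_mul_sq_block hc.ne', mul_pow, tsum_mul_left,
    tsum_sq_sub_eq_two_mul_tsum erfSeq_one_sub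
      (summable_sub_of_monotone (erfSeq_monotone hc.le) abs_erfSeq_le_one) abs_erfSeq_le_one]
  rw [div_pow, sq_sqrt pi_pos.le]
  field_simp
  rfl

end ErfSeq

lemma tsum_integral_erfTerm {X : Type*} [MeasurableSpace X] {μ : Measure X} [IsFiniteMeasure μ]
    {c : X → ℝ} (hc : Measurable c) (hc0 : ∀ x, 0 ≤ c x) :
    ∑' k, ∫ x, erfTerm (c x) k ∂μ = ∫ x, ∑' k, erfTerm (c x) k ∂μ := by
  have hint : ∀ k, Integrable (fun x => erfTerm (c x) k) μ := fun k =>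
    Integrable.of_bound (by unfold erfTerm erfSeq; fun_prop) 2 <| ae_of_all _ fun x => by
      simpa using sum_abs_erfTerm_le (hc0 x) {k}
  refine integral_tsum_of_summable_integral_norm hint <| summable_of_sum_le
    (c := 2 * μ.real Set.univ) (fun k => integral_nonneg fun x => norm_nonneg _) fun u => ?_
  rw [← integral_finsetSum u fun k _ => (hint k).norm]
  calc ∫ x, ∑ k ∈ u, ‖erfTerm (c x) k‖ ∂μ ≤ ∫ _, 2 ∂μ :=
        integral_mono (integrable_finsetSum u fun k _ => (hint k).norm) (integrable_const 2)
          fun x => sum_abs_erfTerm_le (hc0 x) u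
    _ = 2 * μ.real Set.univ := by rw [integral_const, smul_eq_mul, mul_comm]

lemma sFun_integrand_eq {α t : ℝ} (hα : 0 < α) (ht : 0 < t) :
    α / (8 * π * t) * ∑' k : ℤ, (∫ x in (2 * (k : ℝ) - 1)..(2 * (k : ℝ) + 1),
      exp (-(α * x ^ 2) / (8 * t))) ^ 2 = 1 / 2 * ∑' k, erfTerm √(α / (8 * t)) k := by
  have hc2 : √(α / (8 * t)) ^ 2 = α / (8 * t) := sq_sqrt (by positivity)
  rw [← tsum_sq_integral_exp_neg_mul_sq_block (sqrt_pos.2 (by positivity)), hc2]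
  congr 1
  · field_simp
  · congr! 5 with k x
    rw [mul_pow, hc2]
    congr 1
    ring

/-- Alternative representation of `s(α)` in terms of the error
function. -/
theorem sFun_alt_repr (α : ℝ) (hα : 0 < α) :
    sFun α = (1 / 2) * ∑' k : ℤ, ∫ t in (0:ℝ)..1,
      erf ((2 * (k : ℝ) - 1) * Real.sqrt (α / (8 * t))) *
        (erf ((2 * (k : ℝ) - 1) * Real.sqrt (α / (8 * t)))
          - erf ((2 * (k : ℝ) + 1) * Real.sqrt (α / (8 * t)))) := by
  calc sFun α = ∫ t in Set.Ioc (0:ℝ) 1, 1 / 2 * ∑' k, erfTerm √(α / (8 * t)) k := by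
        rw [sFun, intervalIntegral.integral_of_le zero_le_one]
        exact setIntegral_congr_fun measurableSet_Ioc fun t ht => sFun_integrand_eq hα ht.1
    _ = 1 / 2 * ∑' k, ∫ t in Set.Ioc (0:ℝ) 1, erfTerm √(α / (8 * t)) k := by
        rw [integral_const_mul, tsum_integral_erfTerm (by fun_prop) fun t => sqrt_nonneg _]
    _ = _ := by
        simp_rw [intervalIntegral.integral_of_le zero_le_one, erfTerm, erfSeq_add_one, erfSeq]
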